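/- arXiv:1601.03773 — 6 statements merged into one kernel-verified Lean document; each statement's English description precedes it below -/
import Mathlib

section
/- Let y : [0,1] → ℝ be continuous, let a : [0,1] → [0,∞) be continuous with α = ∫₀¹ a(t) dt satisfying 0 < α < 1. If u : [0,1] → ℝ is four times continuously differentiable and satisfies u''''(t) + y(t) = 0 for all t ∈ (0,1), together with the boundary conditions u'(0) = u'(1) = u''(0) = 0 and u(0) = ∫₀¹ a(s) u(s) ds, then for every t ∈ [0,1], u(t) = ∫₀¹ ( G(t,s) + (1/(1-α)) ∫₀¹ a(τ) G(τ,s) dτ ) y(s) ds. -/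
/-- The Green's function of the fourth-order problem. -/
noncomputable def G (t s : ℝ) : ℝ :=
  if s ≤ t then (t ^ 3 * (1 - s) ^ 2 - (t - s) ^ 3) / 6
  else t ^ 3 * (1 - s) ^ 2 / 6

/-!
For fixed `t`, `G t s = t³(1-s)²/6 - (t-s)₊³/6` is a cubic in `s` on either side of `t`.
Integrating each cubic against `u'''' = -y` by parts four times (Lagrange's identity), the
boundary conditions `u'(0) = u'(1) = u''(0) = 0` remove all boundary terms but the values of `u`
and two copies of `t³u'''(0)/6` which cancel, so `∫₀¹ G(t,s) y(s) ds = u(t) - u(0)`. Multiplying by `a(t)` and exchanging the integrals,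
`∫₀¹ (∫₀¹ a(τ) G(τ,s) dτ) y(s) ds = ∫₀¹ a(τ) (u(τ) - u(0)) dτ = (1 - α) u(0)` by the nonlocal
condition; dividing by `1 - α` and adding the two identities gives the representation.
-/

open Set MeasureTheory

theorem ContDiffOn.hasDerivWithinAt_iteratedDerivWithin {u : ℝ → ℝ} {s : Set ℝ} {n k : ℕ}
    (hu : ContDiffOn ℝ n u s) (hs : UniqueDiffOn ℝ s) (hk : k < n) {x : ℝ} (hx : x ∈ s) :
    HasDerivWithinAt (iteratedDerivWithin k u s) (iteratedDerivWithin (k + 1) u s x) s x := by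
  rw [iteratedDerivWithin_succ]
  exact ((hu.differentiableOn_iteratedDerivWithin (mod_cast hk) hs) x hx).hasDerivWithinAt

theorem integral_mul_iteratedDerivWithin_four {u g g₁ g₂ : ℝ → ℝ} {c p q a b : ℝ}
    (hu : ContDiffOn ℝ 4 u (Icc p q)) (hpq : p < q)
    (hg : ∀ x, HasDerivAt g (g₁ x) x) (hg₁ : ∀ x, HasDerivAt g₁ (g₂ x) x)
    (hg₂ : ∀ x, HasDerivAt g₂ c x) (hab : a ≤ b) (hpa : p ≤ a) (hbq : b ≤ q) :
    ∫ x in a..b, g x * iteratedDerivWithin 4 u (Icc p q) x =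
      (g b * iteratedDerivWithin 3 u (Icc p q) b - g₁ b * iteratedDerivWithin 2 u (Icc p q) b +
          g₂ b * derivWithin u (Icc p q) b - c * u b) -
        (g a * iteratedDerivWithin 3 u (Icc p q) a - g₁ a * iteratedDerivWithin 2 u (Icc p q) a +
          g₂ a * derivWithin u (Icc p q) a - c * u a) := by
  set D := fun k => iteratedDerivWithin k u (Icc p q)
  suffices ∫ x in a..b, g x * D 4 x =
      (g b * D 3 b - g₁ b * D 2 b + g₂ b * D 1 b - c * D 0 b) -
        (g a * D 3 a - g₁ a * D 2 a + g₂ a * D 1 a - c * D 0 a) by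
    simpa only [D, iteratedDerivWithin_one, iteratedDerivWithin_zero] using this
  have hsub : Icc a b ⊆ Icc p q := Icc_subset_Icc hpa hbq
  have hcont : ∀ k ≤ 4, ContinuousOn (D k) (Icc a b) := fun k hk =>
    (hu.continuousOn_iteratedDerivWithin (mod_cast hk) (uniqueDiffOn_Icc hpq)).mono hsub
  have hderiv : ∀ k < 4, ∀ x ∈ Ioo a b, HasDerivAt (D k) (D (k + 1) x) x := fun k hk x hx =>
    (hu.hasDerivWithinAt_iteratedDerivWithin (uniqueDiffOn_Icc hpq) hk
      (hsub (Ioo_subset_Icc_self hx))).hasDerivAt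
      (Icc_mem_nhds (hpa.trans_lt hx.1) (hx.2.trans_le hbq))
  have cg : Continuous g := continuous_iff_continuousAt.2 fun x => (hg x).continuousAt
  have cg₁ : Continuous g₁ := continuous_iff_continuousAt.2 fun x => (hg₁ x).continuousAt
  have cg₂ : Continuous g₂ := continuous_iff_continuousAt.2 fun x => (hg₂ x).continuousAt
  have h0 := hcont 0 (by norm_num)
  have h1 := hcont 1 (by norm_num)
  have h2 := hcont 2 (by norm_num)
  have h3 := hcont 3 (by norm_num)
  have h4 := hcont 4 le_rfl
  refine intervalIntegral.integral_eq_sub_of_hasDerivAt_of_le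
    (f := fun x => g x * D 3 x - g₁ x * D 2 x + g₂ x * D 1 x - c * D 0 x) hab (by fun_prop)
    (fun x hx => ?_) ((cg.continuousOn.mul h4).intervalIntegrable_of_Icc hab)
  refine ((((hg x).mul (hderiv 3 (by norm_num) x hx)).sub
    ((hg₁ x).mul (hderiv 2 (by norm_num) x hx))).add
    ((hg₂ x).mul (hderiv 1 (by norm_num) x hx)) |>.sub
    ((hderiv 0 (by norm_num) x hx).const_mul c)).congr_deriv ?_
  simp only [Nat.reduceAdd]
  ring

theorem continuous_G : Continuous (Function.uncurry G) :=
  Continuous.if_le (by fun_prop) (by fun_prop) continuous_snd continuous_fst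
    fun p h => by rw [h]; ring

theorem G_of_le {t s : ℝ} (h : s ≤ t) : G t s = t ^ 3 * (1 - s) ^ 2 / 6 - (t - s) ^ 3 / 6 := by
  rw [G, if_pos h]; ring

theorem G_of_ge {t s : ℝ} (h : t ≤ s) : G t s = t ^ 3 * (1 - s) ^ 2 / 6 := by
  rcases h.eq_or_lt with rfl | h
  · rw [G_of_le le_rfl]; ring
  · rw [G, if_neg (not_le.2 h)]

theorem intervalIntegral_G_mul_split {y : ℝ → ℝ} (hy : ContinuousOn y (Icc 0 1)) {t : ℝ}
    (ht : t ∈ Icc (0 : ℝ) 1) :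
    ∫ s in (0 : ℝ)..1, G t s * y s =
      (∫ s in (0 : ℝ)..1, t ^ 3 * (1 - s) ^ 2 / 6 * y s) -
        ∫ s in (0 : ℝ)..t, (t - s) ^ 3 / 6 * y s := by
  have hint : ∀ f : ℝ → ℝ, Continuous f → ∀ {a b}, a ∈ Icc (0 : ℝ) 1 → b ∈ Icc (0 : ℝ) 1 →
      IntervalIntegrable (fun s => f s * y s) volume a b := fun f hf a b ha hb =>
    (hf.continuousOn.mul hy).intervalIntegrable_of_Icc zero_le_one |>.mono_set
      (uIcc_subset_uIcc (by rwa [uIcc_of_le zero_le_one]) (by rwa [uIcc_of_le zero_le_one]))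
  have h0 : (0 : ℝ) ∈ Icc (0 : ℝ) 1 := left_mem_Icc.2 zero_le_one
  have h1 : (1 : ℝ) ∈ Icc (0 : ℝ) 1 := right_mem_Icc.2 zero_le_one
  have cG : Continuous (G t) := continuous_G.comp (Continuous.prodMk_right t)
  have cR : Continuous fun s : ℝ => t ^ 3 * (1 - s) ^ 2 / 6 := by fun_prop
  have cL : Continuous fun s : ℝ => (t - s) ^ 3 / 6 := by fun_prop
  calc ∫ s in (0 : ℝ)..1, G t s * y s
      = (∫ s in (0 : ℝ)..t, G t s * y s) + ∫ s in t..1, G t s * y s :=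
        (intervalIntegral.integral_add_adjacent_intervals (hint _ cG h0 ht) (hint _ cG ht h1)).symm
    _ = (∫ s in (0 : ℝ)..t, (t ^ 3 * (1 - s) ^ 2 / 6 * y s - (t - s) ^ 3 / 6 * y s)) +
          ∫ s in t..1, t ^ 3 * (1 - s) ^ 2 / 6 * y s := by
        congr 1 <;> refine intervalIntegral.integral_congr fun s hs => ?_
        · rw [uIcc_of_le ht.1] at hs
          simp only [G_of_le hs.2, sub_mul]
        · rw [uIcc_of_le ht.2] at hs
          simp only [G_of_ge hs.1]
    _ = _ := by
        rw [intervalIntegral.integral_sub (hint _ cR h0 ht) (hint _ cL h0 ht), sub_add_eq_add_sub,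
          intervalIntegral.integral_add_adjacent_intervals (hint _ cR h0 ht) (hint _ cR ht h1)]

theorem intervalIntegral_G_mul_eq_sub {y u : ℝ → ℝ} (hy : ContinuousOn y (Icc 0 1))
    (hu : ContDiffOn ℝ 4 u (Icc 0 1))
    (hode : ∀ t ∈ Ioo (0 : ℝ) 1, iteratedDerivWithin 4 u (Icc 0 1) t + y t = 0)
    (hbc1 : derivWithin u (Icc 0 1) 0 = 0) (hbc2 : derivWithin u (Icc 0 1) 1 = 0)
    (hbc3 : iteratedDerivWithin 2 u (Icc 0 1) 0 = 0) {t : ℝ} (ht : t ∈ Icc (0 : ℝ) 1) :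
    ∫ s in (0 : ℝ)..1, G t s * y s = u t - u 0 := by
  set D := fun k => iteratedDerivWithin k u (Icc (0 : ℝ) 1)
  have hyD : EqOn y (fun s => -D 4 s) (Icc 0 1) := by
    refine EqOn.of_subset_closure (fun s hs => ?_) hy
      (hu.continuousOn_iteratedDerivWithin le_rfl (uniqueDiffOn_Icc one_pos)).neg
      Ioo_subset_Icc_self (closure_Ioo zero_ne_one).ge
    linarith [hode s hs]
  have dR : ∀ x, HasDerivAt (fun s => t ^ 3 * (1 - s) ^ 2 / 6) (-(t ^ 3 * (1 - x)) / 3) x :=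
    fun x => ((((hasDerivAt_id x).const_sub 1).pow 2).const_mul (t ^ 3)).div_const 6
      |>.congr_deriv (by simp; ring)
  have dR₁ : ∀ x, HasDerivAt (fun s => -(t ^ 3 * (1 - s)) / 3) (t ^ 3 / 3) x := fun x =>
    (((hasDerivAt_id x).const_sub 1).const_mul (t ^ 3)).neg.div_const 3 |>.congr_deriv (by simp)
  have dL : ∀ x, HasDerivAt (fun s => (t - s) ^ 3 / 6) (-((t - x) ^ 2 / 2)) x := fun x =>
    (((hasDerivAt_id x).const_sub t).pow 3).div_const 6 |>.congr_deriv (by simp; ring)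
  have dL₁ : ∀ x, HasDerivAt (fun s => -((t - s) ^ 2 / 2)) (t - x) x := fun x =>
    ((((hasDerivAt_id x).const_sub t).pow 2).div_const 2).neg |>.congr_deriv (by simp; ring)
  have dL₂ : ∀ x, HasDerivAt (fun s => t - s) (-1) x := fun x =>
    (hasDerivAt_id x).const_sub t
  have hright := integral_mul_iteratedDerivWithin_four hu one_pos dR dR₁
    (fun _ => hasDerivAt_const _ (t ^ 3 / 3)) zero_le_one le_rfl le_rfl
  have hleft := integral_mul_iteratedDerivWithin_four hu one_pos dL dL₁ dL₂ ht.1 le_rfl ht.2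
  have hyD_on : ∀ {a b}, a ∈ Icc (0 : ℝ) 1 → b ∈ Icc (0 : ℝ) 1 → ∀ g : ℝ → ℝ,
      ∫ s in a..b, g s * y s = -∫ s in a..b, g s * D 4 s := fun ha hb g => by
    rw [← intervalIntegral.integral_neg]
    refine intervalIntegral.integral_congr fun s hs => ?_
    simp only [hyD (uIcc_subset_Icc ha hb hs), mul_neg]
  have h0 : (0 : ℝ) ∈ Icc (0 : ℝ) 1 := left_mem_Icc.2 zero_le_one
  rw [intervalIntegral_G_mul_split hy ht, hyD_on h0 (right_mem_Icc.2 zero_le_one), hyD_on h0 ht,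
    hright, hleft]
  simp only [hbc1, hbc2, hbc3]
  ring

section Fubini

variable {a b : ℝ} {F : ℝ → ℝ → ℝ}

theorem ContinuousOn.integrableOn_Ioc_prod_Ioc
    (hF : ContinuousOn (Function.uncurry F) (Icc a b ×ˢ Icc a b)) :
    IntegrableOn (Function.uncurry F) (Ioc a b ×ˢ Ioc a b) :=
  (hF.integrableOn_compact (isCompact_Icc.prod isCompact_Icc)).mono_set
    (prod_mono Ioc_subset_Icc_self Ioc_subset_Icc_self)

theorem intervalIntegrable_intervalIntegral_of_continuousOn (hab : a ≤ b)
    (hF : ContinuousOn (Function.uncurry F) (Icc a b ×ˢ Icc a b)) :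
    IntervalIntegrable (fun s => ∫ τ in a..b, F τ s) volume a b := by
  have hI := hF.integrableOn_Ioc_prod_Ioc
  rw [IntegrableOn, Measure.volume_eq_prod, ← Measure.prod_restrict] at hI
  simp only [intervalIntegrable_iff_integrableOn_Ioc_of_le hab, intervalIntegral.integral_of_le hab]
  exact hI.integral_prod_right

theorem continuousOn_uncurry_mul_mul {w y : ℝ → ℝ} (hw : ContinuousOn w (Icc a b))
    (hF : ContinuousOn (Function.uncurry F) (Icc a b ×ˢ Icc a b)) (hy : ContinuousOn y (Icc a b)) :
    ContinuousOn (Function.uncurry fun τ s => w τ * F τ s * y s) (Icc a b ×ˢ Icc a b) :=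
  ((hw.comp continuous_fst.continuousOn fun _ hp => hp.1).mul hF).mul
    (hy.comp continuous_snd.continuousOn fun _ hp => hp.2)

theorem intervalIntegral_mul_intervalIntegral_swap {w y : ℝ → ℝ} (hab : a ≤ b)
    (hw : ContinuousOn w (Icc a b)) (hF : ContinuousOn (Function.uncurry F) (Icc a b ×ˢ Icc a b))
    (hy : ContinuousOn y (Icc a b)) :
    ∫ s in a..b, (∫ τ in a..b, w τ * F τ s) * y s =
      ∫ τ in a..b, w τ * ∫ s in a..b, F τ s * y s := by
  calc ∫ s in a..b, (∫ τ in a..b, w τ * F τ s) * y s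
      = ∫ s in a..b, ∫ τ in a..b, w τ * F τ s * y s := by
        simp only [intervalIntegral.integral_mul_const]
    _ = ∫ τ in a..b, ∫ s in a..b, w τ * F τ s * y s := by
        refine (intervalIntegral_intervalIntegral_swap ?_).symm
        simpa only [uIoc_of_le hab] using
          (continuousOn_uncurry_mul_mul hw hF hy).integrableOn_Ioc_prod_Ioc
    _ = ∫ τ in a..b, w τ * ∫ s in a..b, F τ s * y s := by
        simp only [mul_assoc, intervalIntegral.integral_const_mul]

end Fubini

theorem stmt_0_general (y a u : ℝ → ℝ)
    (hy : ContinuousOn y (Set.Icc 0 1))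
    (ha : ContinuousOn a (Set.Icc 0 1))
    (hα1 : (∫ t in (0 : ℝ)..1, a t) < 1)
    (hu : ContDiffOn ℝ 4 u (Set.Icc 0 1))
    (hode : ∀ t ∈ Set.Ioo (0 : ℝ) 1,
      iteratedDerivWithin 4 u (Set.Icc 0 1) t + y t = 0)
    (hbc1 : derivWithin u (Set.Icc 0 1) 0 = 0)
    (hbc2 : derivWithin u (Set.Icc 0 1) 1 = 0)
    (hbc3 : iteratedDerivWithin 2 u (Set.Icc 0 1) 0 = 0)
    (hbc4 : u 0 = ∫ s in (0 : ℝ)..1, a s * u s) :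
    ∀ t ∈ Set.Icc (0 : ℝ) 1,
      u t = ∫ s in (0 : ℝ)..1,
        (G t s + (1 / (1 - ∫ τ in (0 : ℝ)..1, a τ)) *
          ∫ τ in (0 : ℝ)..1, a τ * G τ s) * y s := by
  intro t ht
  set α := ∫ τ in (0 : ℝ)..1, a τ
  have hGreen τ (hτ : τ ∈ Icc (0 : ℝ) 1) :=
    intervalIntegral_G_mul_eq_sub hy hu hode hbc1 hbc2 hbc3 hτ
  have hau : IntervalIntegrable (fun τ => a τ * u τ) volume 0 1 :=
    (ha.mul hu.continuousOn).intervalIntegrable_of_Icc zero_le_one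
  have hmean : ∫ s in (0 : ℝ)..1, (∫ τ in (0 : ℝ)..1, a τ * G τ s) * y s = (1 - α) * u 0 := by
    rw [intervalIntegral_mul_intervalIntegral_swap zero_le_one ha continuous_G.continuousOn hy,
      intervalIntegral.integral_congr fun τ hτ => by
        rw [hGreen τ (by rwa [uIcc_of_le zero_le_one] at hτ), mul_sub],
      intervalIntegral.integral_sub hau ((ha.intervalIntegrable_of_Icc zero_le_one).mul_const _),
      intervalIntegral.integral_mul_const, ← hbc4]
    ring
  have hint₁ : IntervalIntegrable (fun s => G t s * y s) volume 0 1 :=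
    ((continuous_G.comp (Continuous.prodMk_right t)).continuousOn.mul hy).intervalIntegrable_of_Icc
      zero_le_one
  have hint₂ : IntervalIntegrable (fun s => (∫ τ in (0 : ℝ)..1, a τ * G τ s) * y s) volume 0 1 := by
    simpa only [intervalIntegral.integral_mul_const] using
      intervalIntegrable_intervalIntegral_of_continuousOn zero_le_one
        (continuousOn_uncurry_mul_mul ha continuous_G.continuousOn hy)
  calc u t = (u t - u 0) + 1 / (1 - α) * ((1 - α) * u 0) := by
        field_simp [(sub_pos.2 hα1).ne']; ring
    _ = _ := by
        rw [← hGreen t ht, ← hmean, ← intervalIntegral.integral_const_mul,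
          ← intervalIntegral.integral_add hint₁ (hint₂.const_mul _)]
        congr 1 with s
        ring

theorem stmt_0 (y a u : ℝ → ℝ)
    (hy : ContinuousOn y (Set.Icc 0 1))
    (ha : ContinuousOn a (Set.Icc 0 1))
    (ha0 : ∀ t ∈ Set.Icc (0 : ℝ) 1, 0 ≤ a t)
    (hα0 : 0 < ∫ t in (0 : ℝ)..1, a t)
    (hα1 : (∫ t in (0 : ℝ)..1, a t) < 1)
    (hu : ContDiffOn ℝ 4 u (Set.Icc 0 1))
    (hode : ∀ t ∈ Set.Ioo (0 : ℝ) 1,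
      iteratedDerivWithin 4 u (Set.Icc 0 1) t + y t = 0)
    (hbc1 : derivWithin u (Set.Icc 0 1) 0 = 0)
    (hbc2 : derivWithin u (Set.Icc 0 1) 1 = 0)
    (hbc3 : iteratedDerivWithin 2 u (Set.Icc 0 1) 0 = 0)
    (hbc4 : u 0 = ∫ s in (0 : ℝ)..1, a s * u s) :
    ∀ t ∈ Set.Icc (0 : ℝ) 1,
      u t = ∫ s in (0 : ℝ)..1,
        (G t s + (1 / (1 - ∫ τ in (0 : ℝ)..1, a τ)) *
          ∫ τ in (0 : ℝ)..1, a τ * G τ s) * y s :=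
  stmt_0_general y a u hy ha hα1 hu hode hbc1 hbc2 hbc3 hbc4
end

section
/- For all t, s ∈ [0,1], G(t,s) ≥ 0. -/
theorem stmt_2 :
    ∀ t ∈ Set.Icc (0 : ℝ) 1, ∀ s ∈ Set.Icc (0 : ℝ) 1, 0 ≤ G t s := by
  rintro t ⟨ht0, ht1⟩ s ⟨hs0, hs1⟩
  unfold G
  split_ifs with h
  · have h1 : t - s ≤ t * (1 - s) := by nlinarith
    have h2 : (t - s) ^ 3 ≤ (t * (1 - s)) ^ 3 :=
      pow_le_pow_left₀ (by linarith) h1 3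
    have h3 : (t * (1 - s)) ^ 3 ≤ t ^ 3 * (1 - s) ^ 2 := by
      rw [mul_pow]
      have : (1 - s) ^ 3 ≤ (1 - s) ^ 2 := by nlinarith [sq_nonneg (1 - s)]
      exact mul_le_mul_of_nonneg_left this (pow_nonneg ht0 3)
    linarith
  · positivity
end

section
/- For all t, s ∈ [0,1] with s ≤ t, G(t,s) ≥ (1/6) t² (1−t) s (1−s)². -/
theorem stmt_6 :
    ∀ t ∈ Set.Icc (0 : ℝ) 1, ∀ s ∈ Set.Icc (0 : ℝ) 1, s ≤ t →
      (1 / 6) * t ^ 2 * (1 - t) * s * (1 - s) ^ 2 ≤ G t s := by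
  rintro t ⟨ht0, ht1⟩ s ⟨hs0, hs1⟩ hst
  rw [G, if_pos hst]
  have h1 : (0:ℝ) ≤ t * (1 - s) - s * (1 - t) := by nlinarith
  have h2 : (0:ℝ) ≤ 2 * (t * (1 - s)) - s * (1 - t) := by nlinarith
  nlinarith [mul_nonneg (mul_nonneg hs0 ht0) (sq_nonneg (t * (1 - s))),
    mul_nonneg (mul_nonneg (mul_nonneg hs0 (sub_nonneg.2 ht1)) h2) h1]
end

section
/- For all t, s ∈ [0,1] with s ≤ t, G(t,s) − (1/6) s (1−s)² = (1/6) s (t−1)² ((s−2)t + 2s − 1) ≤ 0; in particular G(t,s) ≤ (1/6) s (1−s)². -/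
theorem stmt_7 :
    ∀ t ∈ Set.Icc (0 : ℝ) 1, ∀ s ∈ Set.Icc (0 : ℝ) 1, s ≤ t →
      G t s - (1 / 6) * s * (1 - s) ^ 2
          = (1 / 6) * s * (t - 1) ^ 2 * ((s - 2) * t + 2 * s - 1) ∧
        (1 / 6) * s * (t - 1) ^ 2 * ((s - 2) * t + 2 * s - 1) ≤ 0 ∧
        G t s ≤ (1 / 6) * s * (1 - s) ^ 2 := by
  rintro t ⟨ht0, ht1⟩ s ⟨hs0, hs1⟩ hst
  have hG : G t s = (t ^ 3 * (1 - s) ^ 2 - (t - s) ^ 3) / 6 := if_pos hst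
  have heq : G t s - (1 / 6) * s * (1 - s) ^ 2
      = (1 / 6) * s * (t - 1) ^ 2 * ((s - 2) * t + 2 * s - 1) := by
    rw [hG]; ring
  have hle : (1 / 6) * s * (t - 1) ^ 2 * ((s - 2) * t + 2 * s - 1) ≤ 0 := by
    have h1 : (s - 2) * t + 2 * s - 1 ≤ 0 := by nlinarith
    have h2 : (0:ℝ) ≤ (1 / 6) * s * (t - 1) ^ 2 := by positivity
    exact mul_nonpos_of_nonneg_of_nonpos h2 h1
  exact ⟨heq, hle, by linarith [heq ▸ hle]⟩
end

section
/- Let y : [0,1] → [0,∞) be continuous and let a : [0,1] → [0,∞) be continuous with α = ∫₀¹ a(t) dt satisfying 0 < α < 1. Then the function u(t) = ∫₀¹ ( G(t,s) + (1/(1-α)) ∫₀¹ a(τ) G(τ,s) dτ ) y(s) ds is nonnegative on [0,1]. -/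
lemma G_nonneg {t s : ℝ} (ht : t ∈ Set.Icc (0:ℝ) 1) (hs : s ∈ Set.Icc (0:ℝ) 1) :
    0 ≤ G t s := by
  obtain ⟨ht0, ht1⟩ := ht
  obtain ⟨hs0, hs1⟩ := hs
  unfold G
  split_ifs with h
  · have h1 : t - s ≤ t * (1 - s) := by nlinarith
    have h2 : (t - s) ^ 3 ≤ (t * (1 - s)) ^ 3 :=
      pow_le_pow_left₀ (by linarith) h1 3
    have h3 : (t * (1 - s)) ^ 3 = t ^ 3 * (1 - s) ^ 3 := by ring
    have h4 : t ^ 3 * (1 - s) ^ 3 ≤ t ^ 3 * (1 - s) ^ 2 :=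
      mul_le_mul_of_nonneg_left
        (pow_le_pow_of_le_one (by linarith) (by linarith) (by norm_num))
        (pow_nonneg ht0 3)
    linarith
  · positivity

theorem stmt_8 (y a u : ℝ → ℝ)
    (hy : ContinuousOn y (Set.Icc 0 1))
    (hy0 : ∀ t ∈ Set.Icc (0 : ℝ) 1, 0 ≤ y t)
    (ha : ContinuousOn a (Set.Icc 0 1))
    (ha0 : ∀ t ∈ Set.Icc (0 : ℝ) 1, 0 ≤ a t)
    (hα0 : 0 < ∫ t in (0 : ℝ)..1, a t)
    (hα1 : (∫ t in (0 : ℝ)..1, a t) < 1)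
    (hu : ∀ t, u t = ∫ s in (0 : ℝ)..1,
      (G t s + (1 / (1 - ∫ τ in (0 : ℝ)..1, a τ)) *
        ∫ τ in (0 : ℝ)..1, a τ * G τ s) * y s) :
    ∀ t ∈ Set.Icc (0 : ℝ) 1, 0 ≤ u t := by
  intro t ht
  rw [hu t]
  apply intervalIntegral.integral_nonneg zero_le_one
  intro s hs
  apply mul_nonneg _ (hy0 s hs)
  apply add_nonneg (G_nonneg ht hs)
  apply mul_nonneg
  · apply div_nonneg zero_le_one
    linarith
  · apply intervalIntegral.integral_nonneg zero_le_one
    intro τ hτ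
    exact mul_nonneg (ha0 τ hτ) (G_nonneg hτ hs)
end

section
/- Let θ ∈ (0, 1/2), let y : [0,1] → [0,∞) be continuous, and let a : [0,1] → [0,∞) be continuous with α = ∫₀¹ a(t) dt satisfying 0 < α < 1; set β = ∫_θ^{1−θ} a(t) dt. Then the function u(t) = ∫₀¹ ( G(t,s) + (1/(1-α)) ∫₀¹ a(τ) G(τ,s) dτ ) y(s) ds satisfies u(t) ≥ (θ³/6)·((1−α+β)/(1−α)) ∫₀¹ s (1−s)² y(s) ds for every t ∈ [θ, 1−θ]. -/
lemma G_eq (t s : ℝ) : G t s = (t ^ 3 * (1 - s) ^ 2 - (max (t - s) 0) ^ 3) / 6 := by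
  unfold G
  rcases le_or_gt s t with h | h
  · rw [if_pos h, max_eq_left (by linarith)]
  · rw [if_neg (not_le.mpr h), max_eq_right (by linarith)]
    ring

lemma G_cont : Continuous fun p : ℝ × ℝ => G p.1 p.2 := by
  have : (fun p : ℝ × ℝ => G p.1 p.2)
      = fun p : ℝ × ℝ => (p.1 ^ 3 * (1 - p.2) ^ 2 - (max (p.1 - p.2) 0) ^ 3) / 6 := by
    funext p; exact G_eq p.1 p.2
  rw [this]; fun_prop

lemma G_lb {t s : ℝ} (ht0 : 0 ≤ t) (ht1 : t ≤ 1) (hs0 : 0 ≤ s) (hs1 : s ≤ 1) :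
    t ^ 3 * (s * (1 - s) ^ 2) / 6 ≤ G t s := by
  unfold G
  rcases le_or_gt s t with h | h
  · rw [if_pos h]
    have h1 : (0:ℝ) ≤ t - s := by linarith
    have h2 : t - s ≤ t * (1 - s) := by nlinarith
    have h3 : (t - s) ^ 3 ≤ (t * (1 - s)) ^ 3 := pow_le_pow_left₀ h1 h2 3
    nlinarith
  · rw [if_neg (not_le.mpr h)]
    nlinarith [pow_nonneg ht0 3, pow_nonneg (by linarith : (0:ℝ) ≤ 1 - s) 3]

lemma G_nonneg_s10 {t s : ℝ} (ht0 : 0 ≤ t) (ht1 : t ≤ 1) (hs0 : 0 ≤ s) (hs1 : s ≤ 1) :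
    0 ≤ G t s :=
  le_trans (by positivity) (G_lb ht0 ht1 hs0 hs1)

theorem stmt_10 (θ : ℝ) (hθ : θ ∈ Set.Ioo (0 : ℝ) (1 / 2)) (y a u : ℝ → ℝ)
    (hy : ContinuousOn y (Set.Icc 0 1))
    (hy0 : ∀ t ∈ Set.Icc (0 : ℝ) 1, 0 ≤ y t)
    (ha : ContinuousOn a (Set.Icc 0 1))
    (ha0 : ∀ t ∈ Set.Icc (0 : ℝ) 1, 0 ≤ a t)
    (hα0 : 0 < ∫ t in (0 : ℝ)..1, a t)
    (hα1 : (∫ t in (0 : ℝ)..1, a t) < 1)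
    (hu : ∀ t, u t = ∫ s in (0 : ℝ)..1,
      (G t s + (1 / (1 - ∫ τ in (0 : ℝ)..1, a τ)) *
        ∫ τ in (0 : ℝ)..1, a τ * G τ s) * y s) :
    ∀ t ∈ Set.Icc θ (1 - θ),
      (θ ^ 3 / 6) *
        ((1 - (∫ τ in (0 : ℝ)..1, a τ) + ∫ τ in θ..(1 - θ), a τ) /
          (1 - ∫ τ in (0 : ℝ)..1, a τ)) *
        ∫ s in (0 : ℝ)..1, s * (1 - s) ^ 2 * y s ≤ u t := by
  obtain ⟨hθ0, hθ2⟩ := hθ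
  intro t ht
  obtain ⟨htl, htr⟩ := ht
  have ht0 : 0 ≤ t := le_trans hθ0.le htl
  have ht1 : t ≤ 1 := by linarith
  -- continuous extension of a
  set a' : ℝ → ℝ := fun τ => a (max 0 (min τ 1)) with ha'def
  have ha'cont : Continuous a' := by
    have h1 : Continuous fun τ : ℝ => max 0 (min τ 1) := by fun_prop
    have h2 : ∀ τ : ℝ, max 0 (min τ 1) ∈ Set.Icc (0:ℝ) 1 := by
      intro τ
      constructor
      · exact le_max_left _ _
      · exact max_le (by norm_num) (min_le_right _ _)
    exact (ha.comp_continuous h1 h2)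
  have ha'eq : ∀ τ ∈ Set.Icc (0:ℝ) 1, a' τ = a τ := by
    intro τ ⟨h1, h2⟩
    simp [ha'def, min_eq_left h2, max_eq_right (le_min h1 (by norm_num : (0:ℝ) ≤ 1)), max_eq_right h1, min_eq_left]
  have ha'0 : ∀ τ : ℝ, 0 ≤ a' τ := fun τ => ha0 _ ⟨le_max_left _ _, max_le (by norm_num) (min_le_right _ _)⟩
  set α := ∫ τ in (0:ℝ)..1, a τ with hαdef
  have hIcc01 : Set.uIcc (0:ℝ) 1 = Set.Icc 0 1 := Set.uIcc_of_le (by norm_num)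
  have hαeq : α = ∫ τ in (0:ℝ)..1, a' τ := by
    apply intervalIntegral.integral_congr
    rw [hIcc01]
    exact fun τ hτ => (ha'eq τ hτ).symm
  have hθIcc : Set.Icc θ (1 - θ) ⊆ Set.Icc (0:ℝ) 1 := by
    intro x ⟨h1, h2⟩; exact ⟨by linarith, by linarith⟩
  have hθuIcc : Set.uIcc θ (1 - θ) = Set.Icc θ (1 - θ) := Set.uIcc_of_le (by linarith)
  set β := ∫ τ in θ..(1 - θ), a τ with hβdef
  have hβeq : β = ∫ τ in θ..(1 - θ), a' τ := by
    apply intervalIntegral.integral_congr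
    rw [hθuIcc]
    exact fun τ hτ => (ha'eq τ (hθIcc hτ)).symm
  set c := 1 / (1 - α) with hcdef
  have hc0 : 0 < c := by
    apply div_pos one_pos; linarith
  -- inner integral
  set inner : ℝ → ℝ := fun s => ∫ τ in (0:ℝ)..1, a' τ * G τ s with hinner
  have hinner_cont : Continuous inner := by
    apply intervalIntegral.continuous_parametric_intervalIntegral_of_continuous'
      (f := fun s τ => a' τ * G τ s)
    apply Continuous.mul
    · exact ha'cont.comp continuous_snd
    · exact G_cont.comp (continuous_snd.prodMk continuous_fst)
  -- lower bound for inner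
  have hinner_lb : ∀ s ∈ Set.Icc (0:ℝ) 1, β * (θ ^ 3 * (s * (1 - s) ^ 2) / 6) ≤ inner s := by
    intro s ⟨hs0, hs1⟩
    have hGpos : ∀ τ ∈ Set.Icc (0:ℝ) 1, 0 ≤ a' τ * G τ s := by
      intro τ ⟨h1, h2⟩
      exact mul_nonneg (ha'0 τ) (G_nonneg_s10 h1 h2 hs0 hs1)
    have hint : ∀ p q : ℝ, 0 ≤ p → q ≤ 1 → IntervalIntegrable (fun τ => a' τ * G τ s) MeasureTheory.volume p q := by
      intro p q hp hq
      apply Continuous.intervalIntegrable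
      exact ha'cont.mul (G_cont.comp (continuous_id.prodMk continuous_const))
    have step1 : (∫ τ in θ..(1 - θ), a' τ * G τ s) ≤ ∫ τ in (0:ℝ)..1, a' τ * G τ s := by
      have hA := hint 0 θ le_rfl (by linarith)
      have hB := hint θ (1-θ) hθ0.le (by linarith)
      have hC := hint (1-θ) 1 (by linarith) le_rfl
      have e1 := intervalIntegral.integral_add_adjacent_intervals hA hB
      have e2 := intervalIntegral.integral_add_adjacent_intervals (hA.trans hB) hC
      have h1 : 0 ≤ ∫ τ in (0:ℝ)..θ, a' τ * G τ s :=
        intervalIntegral.integral_nonneg hθ0.le (fun τ hτ => hGpos τ ⟨hτ.1, by linarith [hτ.2]⟩)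
      have h2 : 0 ≤ ∫ τ in (1-θ)..1, a' τ * G τ s :=
        intervalIntegral.integral_nonneg (by linarith) (fun τ hτ => hGpos τ ⟨by linarith [hτ.1], hτ.2⟩)
      linarith [e1, e2]
    have step2 : β * (θ ^ 3 * (s * (1 - s) ^ 2) / 6) ≤ ∫ τ in θ..(1 - θ), a' τ * G τ s := by
      rw [hβeq]
      have : (∫ τ in θ..(1 - θ), a' τ * (θ ^ 3 * (s * (1 - s) ^ 2) / 6))
          ≤ ∫ τ in θ..(1 - θ), a' τ * G τ s := by
        apply intervalIntegral.integral_mono_on (by linarith)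
        · exact (ha'cont.mul continuous_const).intervalIntegrable _ _
        · exact hint θ (1-θ) hθ0.le (by linarith)
        · intro τ ⟨h1, h2⟩
          have hτ0 : 0 ≤ τ := le_trans hθ0.le h1
          have hτ1 : τ ≤ 1 := by linarith
          apply mul_le_mul_of_nonneg_left _ (ha'0 τ)
          calc θ ^ 3 * (s * (1 - s) ^ 2) / 6 ≤ τ ^ 3 * (s * (1 - s) ^ 2) / 6 := by
                have : θ ^ 3 ≤ τ ^ 3 := pow_le_pow_left₀ hθ0.le h1 3
                have hss : 0 ≤ s * (1 - s) ^ 2 := by positivity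
                nlinarith
            _ ≤ G τ s := G_lb hτ0 hτ1 hs0 hs1
      rw [intervalIntegral.integral_mul_const] at this
      linarith [this]
    linarith
  -- main estimate
  rw [hu t]
  have hmain : (∫ s in (0:ℝ)..1, (θ ^ 3 / 6) * ((1 - α + β) / (1 - α)) * (s * (1 - s) ^ 2 * y s))
      ≤ ∫ s in (0:ℝ)..1, (G t s + c * inner s) * y s := by
    apply intervalIntegral.integral_mono_on (by norm_num)
    · apply ContinuousOn.intervalIntegrable
      rw [hIcc01]
      exact (continuous_const.continuousOn).mul (((continuous_id.mul (by fun_prop)).continuousOn).mul hy)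
    · apply ContinuousOn.intervalIntegrable
      rw [hIcc01]
      apply ContinuousOn.mul _ hy
      exact ((G_cont.comp (continuous_const.prodMk continuous_id)).add
        (continuous_const.mul hinner_cont)).continuousOn
    · intro s hs
      obtain ⟨hs0, hs1⟩ := hs
      have hys := hy0 s ⟨hs0, hs1⟩
      have h1 : θ ^ 3 * (s * (1 - s) ^ 2) / 6 ≤ G t s := by
        calc θ ^ 3 * (s * (1 - s) ^ 2) / 6 ≤ t ^ 3 * (s * (1 - s) ^ 2) / 6 := by
              have : θ ^ 3 ≤ t ^ 3 := pow_le_pow_left₀ hθ0.le htl 3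
              have hss : 0 ≤ s * (1 - s) ^ 2 := by positivity
              nlinarith
          _ ≤ G t s := G_lb ht0 ht1 hs0 hs1
      have h2 := hinner_lb s ⟨hs0, hs1⟩
      have key : (θ ^ 3 / 6) * ((1 - α + β) / (1 - α)) * (s * (1 - s) ^ 2)
          ≤ G t s + c * inner s := by
        have hccalc : (θ ^ 3 / 6) * ((1 - α + β) / (1 - α)) * (s * (1 - s) ^ 2)
            = θ ^ 3 * (s * (1 - s) ^ 2) / 6 + c * (β * (θ ^ 3 * (s * (1 - s) ^ 2) / 6)) := by
          have hne : (1:ℝ) - α ≠ 0 := by linarith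
          have hfrac : (1 - α + β) / (1 - α) = 1 + c * β := by
            rw [hcdef]; field_simp
          rw [hfrac]; ring
        rw [hccalc]
        have : c * (β * (θ ^ 3 * (s * (1 - s) ^ 2) / 6)) ≤ c * inner s :=
          mul_le_mul_of_nonneg_left h2 hc0.le
        linarith
      calc (θ ^ 3 / 6) * ((1 - α + β) / (1 - α)) * (s * (1 - s) ^ 2 * y s)
          = ((θ ^ 3 / 6) * ((1 - α + β) / (1 - α)) * (s * (1 - s) ^ 2)) * y s := by ring
        _ ≤ (G t s + c * inner s) * y s := mul_le_mul_of_nonneg_right key hys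
  -- rewrite u integrand to use a'
  have hueq : (∫ s in (0:ℝ)..1, (G t s + (1 / (1 - α)) * ∫ τ in (0:ℝ)..1, a τ * G τ s) * y s)
      = ∫ s in (0:ℝ)..1, (G t s + c * inner s) * y s := by
    apply intervalIntegral.integral_congr
    intro s hs
    have : (∫ τ in (0:ℝ)..1, a τ * G τ s) = inner s := by
      apply intervalIntegral.integral_congr
      rw [hIcc01]
      intro τ hτ
      dsimp only
      rw [ha'eq τ hτ]
    dsimp only
    rw [this, hcdef]
  rw [hueq]
  rw [intervalIntegral.integral_const_mul] at hmain
  exact hmain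
end
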